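/- The number of quadruples (a,b,c,d) of positive integers with 1 ≤ a,b,c,d ≤ H satisfying ad = bc equals (12/π²)·H²·log H + O(H²) as H → ∞. -/

import Mathlib

open Finset Filter

/-- The number of quadruples `(a,b,c,d) ∈ [1,H]⁴` with `ad = bc`. -/
def singCount (H : ℕ) : ℕ :=
  ((Finset.Icc 1 H ×ˢ Finset.Icc 1 H ×ˢ Finset.Icc 1 H ×ˢ Finset.Icc 1 H).filter
    fun x => x.1 * x.2.2.2 = x.2.1 * x.2.2.1).card

/-!
Every solution of `a d = b c` is `(e u, e v, f u, f v)` for a unique coprime pair `(u, v)`, so the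
count is `∑_{(u, v) coprime} ⌊H / max u v⌋²`. Möbius inversion removes the coprimality condition:
the count becomes `∑_{d ≤ H} μ(d) A(⌊H / d⌋)`, where
`A(N) = ∑_{u, v ≤ N} ⌊N / max u v⌋² = ∑_{m ≤ N} (2m - 1) ⌊N / m⌋²` is `2 N² log N + O(N²)` by the
harmonic sum. Summing over `d` with `∑ μ(d) / d² = 6 / π²` (whose tail after `H` is `O(1 / H)`)
and `∑ μ(d) log d / d²` convergent gives `(12 / π²) H² log H + O(H²)`.
-/

open Real
open scoped ArithmeticFunction.Moebius

theorem le_div_max_iff {e u v N : ℕ} (h : 0 < max u v) :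
    e ≤ N / max u v ↔ e * u ≤ N ∧ e * v ≤ N := by
  rw [Nat.le_div_iff_mul_le h, ← max_le_iff, Nat.mul_max_mul_left, mul_comm]

theorem singCount_eq_sum_coprime (H : ℕ) :
    singCount H = ∑ p ∈ Icc 1 H ×ˢ Icc 1 H with p.1.Coprime p.2, (H / max p.1 p.2) ^ 2 := by
  have hcard (n : ℕ) : n ^ 2 = #(Icc 1 n ×ˢ Icc 1 n) := by simp [sq]
  simp_rw [hcard, ← card_sigma, singCount]
  symm
  refine card_bij (fun x _ ↦ (x.2.1 * x.1.1, x.2.1 * x.1.2, x.2.2 * x.1.1, x.2.2 * x.1.2))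
    ?_ ?_ ?_
  · rintro ⟨⟨u, v⟩, e, f⟩ hx
    simp only [mem_sigma, mem_filter, mem_product, mem_Icc] at hx
    obtain ⟨⟨⟨⟨hu, -⟩, hv, -⟩, -⟩, ⟨he, heH⟩, hf, hfH⟩ := hx
    rw [le_div_max_iff (by omega)] at heH hfH
    simp only [mem_filter, mem_product, mem_Icc]
    refine ⟨⟨⟨?_, heH.1⟩, ⟨?_, heH.2⟩, ⟨?_, hfH.1⟩, ?_, hfH.2⟩, by ring⟩ <;>
      exact Nat.mul_pos (by omega) (by omega)
  · rintro ⟨⟨u, v⟩, e, f⟩ hx ⟨⟨u', v'⟩, e', f'⟩ hx' h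
    simp only [mem_sigma, mem_filter, mem_product, mem_Icc] at hx hx'
    simp only [Prod.mk.injEq] at h
    obtain ⟨h1, h2, h3, -⟩ := h
    obtain rfl : e = e' := calc
      e = Nat.gcd (e * u) (e * v) := by rw [Nat.gcd_mul_left, hx.1.2, mul_one]
      _ = Nat.gcd (e' * u') (e' * v') := by rw [h1, h2]
      _ = e' := by rw [Nat.gcd_mul_left, hx'.1.2, mul_one]
    obtain ⟨rfl, rfl⟩ : u = u' ∧ v = v' :=
      ⟨Nat.eq_of_mul_eq_mul_left (by omega) h1, Nat.eq_of_mul_eq_mul_left (by omega) h2⟩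
    obtain rfl : f = f' := Nat.eq_of_mul_eq_mul_right (by omega) h3
    rfl
  · rintro ⟨a, b, c, d⟩ hx
    simp only [mem_filter, mem_product, mem_Icc] at hx
    obtain ⟨⟨⟨ha, haH⟩, ⟨hb, hbH⟩, ⟨hc, hcH⟩, hd, hdH⟩, habcd⟩ := hx
    obtain ⟨g, u, v, hg, huv, rfl, rfl⟩ := Nat.exists_coprime' (Nat.gcd_pos_of_pos_left b ha)
    have hud : u * d = v * c := Nat.eq_of_mul_eq_mul_right hg (by linarith)
    obtain ⟨f, rfl⟩ : v ∣ d := huv.symm.dvd_of_dvd_mul_left ⟨c, hud⟩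
    have hv := Nat.pos_of_mul_pos_right hb
    obtain rfl : c = f * u := Nat.eq_of_mul_eq_mul_left hv (by rw [← hud]; ring)
    refine ⟨⟨(u, v), g, f⟩, ?_, by simp only [mul_comm]⟩
    simp only [mem_sigma, mem_filter, mem_product, mem_Icc, le_div_max_iff (lt_max_of_lt_right hv)]
    refine ⟨⟨⟨⟨Nat.pos_of_mul_pos_right ha, ?_⟩, hv, ?_⟩, huv⟩, ⟨hg, ?_, ?_⟩,
      Nat.pos_of_mul_pos_left hd, hcH, ?_⟩ <;> nlinarith

theorem sum_Icc_filter_dvd {M : Type*} [AddCommMonoid M] (N : ℕ) {d : ℕ} (hd : 0 < d)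
    (φ : ℕ → M) : ∑ u ∈ Icc 1 N with d ∣ u, φ u = ∑ u ∈ Icc 1 (N / d), φ (d * u) := by
  symm
  refine sum_nbij' (d * ·) (· / d) ?_ ?_ ?_ ?_ fun _ _ ↦ rfl
  · intro u hu
    simp only [mem_Icc, mem_filter] at hu ⊢
    refine ⟨⟨Nat.mul_pos hd hu.1, ?_⟩, dvd_mul_right d u⟩
    rw [mul_comm]
    exact (Nat.le_div_iff_mul_le hd).mp hu.2
  · intro u hu
    simp only [mem_Icc, mem_filter] at hu ⊢
    obtain ⟨⟨hu1, huN⟩, k, rfl⟩ := hu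
    rw [Nat.mul_div_cancel_left k hd]
    exact ⟨Nat.pos_of_mul_pos_left hu1, (Nat.le_div_iff_mul_le hd).mpr (by linarith)⟩
  · exact fun u _ ↦ Nat.mul_div_cancel_left u hd
  · exact fun u hu ↦ Nat.mul_div_cancel' (mem_filter.mp hu).2

theorem sum_Icc_prod_filter_dvd {M : Type*} [AddCommMonoid M] (N : ℕ) {d : ℕ} (hd : 0 < d)
    (g : ℕ → ℕ → M) :
    ∑ p ∈ Icc 1 N ×ˢ Icc 1 N with d ∣ p.1 ∧ d ∣ p.2, g p.1 p.2 =
      ∑ p ∈ Icc 1 (N / d) ×ˢ Icc 1 (N / d), g (d * p.1) (d * p.2) := by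
  rw [filter_product, sum_product, sum_product, sum_Icc_filter_dvd N hd]
  simp_rw [sum_Icc_filter_dvd N hd]

theorem sum_moebius_dvd_gcd {R : Type*} [Ring R] {N u v : ℕ} (hu : u ∈ Icc 1 N) :
    ∑ d ∈ Icc 1 N with d ∣ u ∧ d ∣ v, (μ d : R) = if u.Coprime v then 1 else 0 := by
  rw [mem_Icc] at hu
  have hgcd : Nat.gcd u v ≠ 0 := (Nat.gcd_pos_of_pos_left v hu.1).ne'
  have hfilter : {d ∈ Icc 1 N | d ∣ u ∧ d ∣ v} = (Nat.gcd u v).divisors := by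
    ext d
    simp only [mem_filter, mem_Icc, Nat.mem_divisors, ← Nat.dvd_gcd_iff]
    refine ⟨fun h ↦ ⟨h.2, hgcd⟩, fun h ↦ ⟨⟨Nat.pos_of_dvd_of_pos h.1 (by omega), ?_⟩, h.1⟩⟩
    exact (Nat.le_of_dvd (by omega) h.1).trans ((Nat.gcd_le_left v (by omega)).trans hu.2)
  have h := congrArg (· (Nat.gcd u v)) (ArithmeticFunction.coe_moebius_mul_coe_zeta (R := R))
  simp only [ArithmeticFunction.coe_mul_zeta_apply, ArithmeticFunction.intCoe_apply,
    ArithmeticFunction.one_apply] at h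
  rw [hfilter, h]

theorem sum_coprime_eq_sum_moebius {R : Type*} [CommRing R] (N : ℕ) (g : ℕ → ℕ → R) :
    ∑ p ∈ Icc 1 N ×ˢ Icc 1 N with p.1.Coprime p.2, g p.1 p.2 =
      ∑ d ∈ Icc 1 N, (μ d : R) * ∑ p ∈ Icc 1 (N / d) ×ˢ Icc 1 (N / d), g (d * p.1) (d * p.2) := by
  calc ∑ p ∈ Icc 1 N ×ˢ Icc 1 N with p.1.Coprime p.2, g p.1 p.2
      = ∑ p ∈ Icc 1 N ×ˢ Icc 1 N,
          (∑ d ∈ Icc 1 N with d ∣ p.1 ∧ d ∣ p.2, (μ d : R)) * g p.1 p.2 := by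
        rw [sum_filter]
        refine sum_congr rfl fun p hp ↦ ?_
        rw [sum_moebius_dvd_gcd (mem_product.mp hp).1, ite_mul, one_mul, zero_mul]
    _ = ∑ d ∈ Icc 1 N,
          (μ d : R) * ∑ p ∈ Icc 1 N ×ˢ Icc 1 N with d ∣ p.1 ∧ d ∣ p.2, g p.1 p.2 := by
        simp_rw [sum_filter, sum_mul, mul_sum, ite_mul, mul_ite, zero_mul, mul_zero]
        exact sum_comm
    _ = _ := sum_congr rfl fun d hd ↦ by rw [sum_Icc_prod_filter_dvd N (mem_Icc.mp hd).1]

/-- `#{(u, v, e, f) ∈ [1, N]⁴ : e u, e v, f u, f v ≤ N}`, counted by fixing `(u, v)`. -/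
def latticeCount (N : ℕ) : ℕ := ∑ p ∈ Icc 1 N ×ˢ Icc 1 N, (N / max p.1 p.2) ^ 2

theorem singCount_eq_sum_moebius (H : ℕ) :
    (singCount H : ℝ) = ∑ d ∈ Icc 1 H, (μ d : ℝ) * latticeCount (H / d) := by
  rw [singCount_eq_sum_coprime, Nat.cast_sum]
  push_cast
  rw [sum_coprime_eq_sum_moebius H fun u v ↦ ((H / max u v : ℕ) : ℝ) ^ 2]
  refine sum_congr rfl fun d _ ↦ ?_
  simp only [latticeCount, Nat.cast_sum, Nat.cast_pow, Nat.mul_max_mul_left,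
    Nat.div_div_eq_div_mul]

theorem sum_Icc_prod_max {M : Type*} [AddCommMonoid M] (N : ℕ) (h : ℕ → M) :
    ∑ p ∈ Icc 1 N ×ˢ Icc 1 N, h (max p.1 p.2) = ∑ m ∈ Icc 1 N, (2 * m - 1) • h m := by
  induction N with
  | zero => simp
  | succ n ih =>
    have hmax {u} (hu : u ∈ Icc 1 n) : max u (n + 1) = n + 1 ∧ max (n + 1) u = n + 1 := by
      simp only [mem_Icc] at hu; omega
    rw [sum_product] at ih ⊢
    simp only [sum_Icc_succ_top (Nat.le_add_left 1 n), sum_add_distrib, ih, max_self]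
    rw [sum_congr rfl fun u hu ↦ congrArg h (hmax hu).1,
      sum_congr rfl fun u hu ↦ congrArg h (hmax hu).2, sum_const, Nat.card_Icc, add_assoc,
      ← add_assoc (_ • _), ← add_nsmul, ← succ_nsmul]
    congr 2
    omega

theorem latticeCount_eq_sum (N : ℕ) :
    (latticeCount N : ℝ) = ∑ m ∈ Icc 1 N, (2 * m - 1 : ℝ) * ((N / m : ℕ) : ℝ) ^ 2 := by
  rw [latticeCount, Nat.cast_sum]
  simp_rw [Nat.cast_pow]
  rw [sum_Icc_prod_max N fun m ↦ ((N / m : ℕ) : ℝ) ^ 2]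
  refine sum_congr rfl fun m hm ↦ ?_
  rw [nsmul_eq_mul, Nat.cast_sub (by simp at hm; omega)]
  push_cast
  ring

theorem sum_Icc_inv_sq_le_two (N : ℕ) : ∑ m ∈ Icc 1 N, ((m : ℝ) ^ 2)⁻¹ ≤ 2 := by
  have h := sum_Ioo_inv_sq_le (α := ℝ) 0 (N + 1)
  rwa [show Ioo 0 (N + 1) = Icc 1 N by ext; simp; omega, Nat.cast_zero, zero_add, div_one] at h

theorem abs_sum_mul_div_sq_sub_le {x : ℝ} (hx : 1 ≤ x) :
    |∑ m ∈ Icc 1 ⌊x⌋₊, (2 * m - 1 : ℝ) * (x / m) ^ 2 - 2 * x ^ 2 * log x| ≤ 2 * x ^ 2 := by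
  set N := ⌊x⌋₊
  have hx0 : 0 < x := by linarith
  have hsum : ∑ m ∈ Icc 1 N, (2 * m - 1 : ℝ) * (x / m) ^ 2 =
      x ^ 2 * (2 * harmonic N - ∑ m ∈ Icc 1 N, ((m : ℝ) ^ 2)⁻¹) := by
    rw [harmonic_eq_sum_Icc, Rat.cast_sum, mul_sum, ← sum_sub_distrib, mul_sum]
    refine sum_congr rfl fun m hm ↦ ?_
    have : (m : ℝ) ≠ 0 := Nat.cast_ne_zero.mpr (by simp at hm; omega)
    push_cast
    field_simp
  have hharm : log x ≤ harmonic N ∧ (harmonic N : ℝ) ≤ 1 + log x := by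
    refine ⟨(log_le_log hx0 ?_).trans (log_add_one_le_harmonic N),
      (harmonic_le_one_add_log N).trans ?_⟩
    · push_cast
      exact (Nat.lt_floor_add_one x).le
    · gcongr
      exacts [Nat.cast_pos.mpr (Nat.floor_pos.mpr hx), Nat.floor_le hx0.le]
  have hS := sum_Icc_inv_sq_le_two N
  have hS0 : 0 ≤ ∑ m ∈ Icc 1 N, ((m : ℝ) ^ 2)⁻¹ := sum_nonneg fun m _ ↦ by positivity
  rw [hsum, abs_le]
  constructor <;> nlinarith

theorem sq_sub_natFloor_sq_le {y : ℝ} (hy : 0 ≤ y) : y ^ 2 - (⌊y⌋₊ : ℝ) ^ 2 ≤ 2 * y := by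
  nlinarith [Nat.floor_le hy, Nat.lt_floor_add_one y]

theorem sum_mul_div_sq_sub_latticeCount_mem {x : ℝ} (hx : 1 ≤ x) :
    ∑ m ∈ Icc 1 ⌊x⌋₊, (2 * m - 1 : ℝ) * (x / m) ^ 2 - latticeCount ⌊x⌋₊ ∈
      Set.Icc 0 (4 * x ^ 2) := by
  have hterm : ∀ m ∈ Icc 1 ⌊x⌋₊,
      (2 * m - 1 : ℝ) * ((x / m) ^ 2 - ⌊x / m⌋₊ ^ 2) ∈ Set.Icc 0 (4 * x) := by
    intro m hm
    have hm1 : (1 : ℝ) ≤ m := by simp at hm; exact_mod_cast hm.1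
    have hy : 0 ≤ x / m := by positivity
    have hfloor : (⌊x / m⌋₊ : ℝ) ^ 2 ≤ (x / m) ^ 2 := by gcongr; exact Nat.floor_le hy
    have hcoeff : (2 * m - 1 : ℝ) * (2 * (x / m)) = 4 * x - 2 * (x / m) := by
      field_simp
      ring
    constructor <;> nlinarith [sq_sub_natFloor_sq_le hy]
  simp_rw [latticeCount_eq_sum, ← sum_sub_distrib, ← mul_sub, ← Nat.floor_div_natCast]
  refine ⟨sum_nonneg fun m hm ↦ (hterm m hm).1, (sum_le_sum fun m hm ↦ (hterm m hm).2).trans ?_⟩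
  rw [sum_const, Nat.card_Icc, nsmul_eq_mul, add_tsub_cancel_right]
  nlinarith [Nat.floor_le (by linarith : 0 ≤ x)]

theorem abs_latticeCount_natFloor_sub_le {x : ℝ} (hx : 1 ≤ x) :
    |(latticeCount ⌊x⌋₊ : ℝ) - 2 * x ^ 2 * log x| ≤ 6 * x ^ 2 := by
  have hmain := abs_sum_mul_div_sq_sub_le hx
  obtain ⟨hlo, hhi⟩ := sum_mul_div_sq_sub_latticeCount_mem hx
  rw [abs_le] at hmain ⊢
  constructor <;> linarith

theorem abs_sum_moebius_mul_latticeCount_sub_le (H : ℕ) :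
    |∑ d ∈ Icc 1 H, (μ d : ℝ) * (latticeCount (H / d) - 2 * ((H : ℝ) / d) ^ 2 * log (H / d))|
      ≤ 12 * (H : ℝ) ^ 2 := by
  calc _ ≤ ∑ d ∈ Icc 1 H, 6 * (H : ℝ) ^ 2 * ((d : ℝ) ^ 2)⁻¹ := by
        refine (abs_sum_le_sum_abs _ _).trans (sum_le_sum fun d hd ↦ ?_)
        rw [mem_Icc] at hd
        have hx : (1 : ℝ) ≤ H / d := by
          rw [one_le_div (by exact_mod_cast hd.1)]
          exact_mod_cast hd.2
        have h := abs_latticeCount_natFloor_sub_le hx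
        rw [Nat.floor_div_eq_div] at h
        rw [abs_mul]
        exact ((mul_le_of_le_one_left (abs_nonneg _)
          (mod_cast ArithmeticFunction.abs_moebius_le_one)).trans h).trans_eq (by ring)
    _ = 6 * (H : ℝ) ^ 2 * ∑ d ∈ Icc 1 H, ((d : ℝ) ^ 2)⁻¹ := by rw [mul_sum]
    _ ≤ 12 * (H : ℝ) ^ 2 := by nlinarith [sum_Icc_inv_sq_le_two H]

theorem abs_tsum_sub_sum_range_le {f : ℕ → ℝ} (hf : Summable f) (N : ℕ)
    (hbound : ∀ n, N < n → |f n| ≤ ((n : ℝ) ^ 2)⁻¹) :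
    |∑' n, f n - ∑ n ∈ range (N + 1), f n| ≤ 2 / ((N : ℝ) + 1) := by
  rw [← hf.sum_add_tsum_nat_add (N + 1), add_sub_cancel_left]
  refine le_of_tendsto'
    ((summable_nat_add_iff (N + 1)).mpr hf).hasSum.tendsto_sum_nat.abs fun M ↦ ?_
  calc |∑ i ∈ range M, f (i + (N + 1))|
      ≤ ∑ i ∈ range M, (((i + (N + 1) : ℕ) : ℝ) ^ 2)⁻¹ :=
        (abs_sum_le_sum_abs _ _).trans <| sum_le_sum fun i _ ↦ hbound _ (by omega)
    _ = ∑ i ∈ Ioo N (M + (N + 1)), ((i : ℝ) ^ 2)⁻¹ := by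
        rw [range_eq_Ico, sum_Ico_add' (fun i : ℕ ↦ ((i : ℝ) ^ 2)⁻¹), zero_add,
          Ico_add_one_left_eq_Ioo]
    _ ≤ 2 / (N + 1) := sum_Ioo_inv_sq_le _ _

open scoped LSeries.notation in
theorem hasSum_moebius_div_sq : HasSum (fun n : ℕ ↦ (μ n : ℝ) / n ^ 2) (6 / π ^ 2) := by
  have hs : 1 < (2 : ℂ).re := by norm_num
  have hL : L ↗μ 2 = ((6 / π ^ 2 : ℝ) : ℂ) := by
    have h := LSeries_one_mul_Lseries_moebius hs
    rw [LSeries_one_eq_riemannZeta hs, riemannZeta_two] at h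
    have hpi : (π : ℂ) ≠ 0 := by exact_mod_cast pi_ne_zero
    push_cast
    field_simp at h ⊢
    linear_combination h
  have hterm (n : ℕ) : LSeries.term ↗μ 2 n = (((μ n : ℝ) / n ^ 2 : ℝ) : ℂ) := by
    rcases eq_or_ne n 0 with rfl | hn
    · simp
    · rw [LSeries.term_of_ne_zero hn, ← Nat.cast_ofNat, Complex.cpow_natCast]
      push_cast
      rfl
  rw [← Complex.hasSum_ofReal, ← hL, ← funext hterm]
  exact (ArithmeticFunction.LSeriesSummable_moebius_iff.mpr hs).hasSum

theorem abs_sub_sum_moebius_div_sq_le (N : ℕ) :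
    |6 / π ^ 2 - ∑ d ∈ Icc 1 N, (μ d : ℝ) / d ^ 2| ≤ 2 / ((N : ℝ) + 1) := by
  have h := abs_tsum_sub_sum_range_le hasSum_moebius_div_sq.summable N fun n _ ↦ by
    rw [abs_div, abs_of_nonneg (sq_nonneg (n : ℝ)), div_eq_mul_inv]
    exact mul_le_of_le_one_left (by positivity) (mod_cast ArithmeticFunction.abs_moebius_le_one)
  rwa [hasSum_moebius_div_sq.tsum_eq, range_eq_Ico, sum_eq_sum_Ico_succ_bot N.succ_pos,
    zero_add, Nat.succ_eq_add_one, Ico_add_one_right_eq_Icc, ArithmeticFunction.map_zero,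
    Int.cast_zero, zero_div, zero_add] at h

theorem summable_log_div_sq : Summable fun n : ℕ ↦ log n / n ^ 2 := by
  refine ((summable_nat_rpow_inv.mpr (by norm_num : (1 : ℝ) < 3 / 2)).mul_left 2).of_nonneg_of_le
    (fun n ↦ by have := log_natCast_nonneg n; positivity) fun n ↦ ?_
  rcases n.eq_zero_or_pos with rfl | hn
  · simp
  have hn' : (0 : ℝ) < n := by exact_mod_cast hn
  have hsq : (n : ℝ) ^ 2 = (n : ℝ) ^ (1 / 2 : ℝ) * (n : ℝ) ^ (3 / 2 : ℝ) := by
    rw [← rpow_add hn']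
    norm_num
  calc log n / n ^ 2 ≤ (n : ℝ) ^ (1 / 2 : ℝ) / (1 / 2) / n ^ 2 := by
        gcongr
        exact log_le_rpow_div hn'.le (by norm_num)
    _ = 2 * ((n : ℝ) ^ (3 / 2 : ℝ))⁻¹ := by
        rw [hsq]
        field_simp

theorem abs_singCount_sub_le (H : ℕ) (hH : 1 ≤ H) :
    |(singCount H : ℝ) - 12 / π ^ 2 * (H : ℝ) ^ 2 * log H|
      ≤ (16 + 2 * ∑' n : ℕ, log n / n ^ 2) * (H : ℝ) ^ 2 := by
  set x : ℝ := (H : ℝ)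
  have hx : 1 ≤ x := Nat.one_le_cast.mpr hH
  have hterm : ∀ d ∈ Icc 1 H, (μ d : ℝ) * (2 * (x / d) ^ 2 * log (x / d)) =
      2 * x ^ 2 * log x * ((μ d : ℝ) / d ^ 2) - 2 * x ^ 2 * ((μ d : ℝ) * log d / d ^ 2) := by
    intro d hd
    have hd : (d : ℝ) ≠ 0 := Nat.cast_ne_zero.mpr (by simp at hd; omega)
    rw [log_div (by positivity) hd]
    field_simp
  have hdecomp : (singCount H : ℝ) - 12 / π ^ 2 * x ^ 2 * log x =
      ∑ d ∈ Icc 1 H, (μ d : ℝ) * (latticeCount (H / d) - 2 * (x / d) ^ 2 * log (x / d))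
        - 2 * x ^ 2 * log x * (6 / π ^ 2 - ∑ d ∈ Icc 1 H, (μ d : ℝ) / d ^ 2)
        - 2 * x ^ 2 * ∑ d ∈ Icc 1 H, (μ d : ℝ) * log d / d ^ 2 := by
    simp only [singCount_eq_sum_moebius, mul_sub, sum_sub_distrib]
    rw [sum_congr rfl hterm, sum_sub_distrib, ← mul_sum, ← mul_sum]
    ring
  have htail :
      |2 * x ^ 2 * log x * (6 / π ^ 2 - ∑ d ∈ Icc 1 H, (μ d : ℝ) / d ^ 2)| ≤ 4 * x ^ 2 := by
    have hlog : 0 ≤ log x := log_nonneg hx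
    have hlog' : log x * (2 / (x + 1)) ≤ 2 := by
      rw [mul_div_assoc', div_le_iff₀ (by positivity)]
      nlinarith [log_le_sub_one_of_pos (by positivity : 0 < x)]
    rw [abs_mul, abs_of_nonneg (by positivity)]
    calc _ ≤ 2 * x ^ 2 * log x * (2 / (x + 1)) := by
          gcongr
          exact abs_sub_sum_moebius_div_sq_le H
      _ ≤ 4 * x ^ 2 := by nlinarith
  have hlogsum : |∑ d ∈ Icc 1 H, (μ d : ℝ) * log d / d ^ 2| ≤ ∑' n : ℕ, log n / n ^ 2 := by
    refine (abs_sum_le_sum_abs _ _).trans <| (sum_le_sum fun d _ ↦ ?_).trans <|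
      summable_log_div_sq.sum_le_tsum _ (fun n _ ↦ by have := log_natCast_nonneg n; positivity)
    rw [abs_div, abs_mul, abs_of_nonneg (log_natCast_nonneg d), abs_of_nonneg (sq_nonneg (d : ℝ))]
    gcongr
    exact mul_le_of_le_one_left (log_natCast_nonneg d)
      (mod_cast ArithmeticFunction.abs_moebius_le_one)
  rw [hdecomp]
  calc _ ≤ 12 * x ^ 2 + 4 * x ^ 2 + 2 * x ^ 2 * ∑' n : ℕ, log n / n ^ 2 := by
        refine (abs_sub _ _).trans (add_le_add ((abs_sub _ _).trans
          (add_le_add (abs_sum_moebius_mul_latticeCount_sub_le H) htail)) ?_)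
        rw [abs_mul, abs_of_nonneg (by positivity)]
        gcongr
    _ = _ := by ring

/-- The number of `(a,b,c,d) ∈ [1,H]⁴` with `ad = bc` is
`(12/π²) H² log H + O(H²)` as `H → ∞`. -/
theorem singCount_asymptotic :
    (fun H : ℕ =>
        (singCount H : ℝ) - 12 / Real.pi ^ 2 * (H : ℝ) ^ 2 * Real.log H)
      =O[atTop] fun H : ℕ => (H : ℝ) ^ 2 := by
  refine .of_bound (16 + 2 * ∑' n : ℕ, log n / n ^ 2) ?_
  filter_upwards [eventually_ge_atTop 1] with H hH
  rw [Real.norm_eq_abs, Real.norm_of_nonneg (by positivity)]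
  exact abs_singCount_sub_le H hH
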